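/- arXiv:2310.12096 — 3 statements merged into one kernel-verified Lean document; each statement's English description precedes it below -/
import Mathlib

section
/- The farthest mincut for an edge is unique: for any edge e, among the (s,t)-cuts of least capacity in which e is a contributing edge, there is exactly one cut C such that no other such cut C' satisfies C ⊊ C'. Moreover, the union of any two mincuts for e is again a mincut for e. -/
/-! Cut capacity is submodular, `c(C ∪ C') + c(C ∩ C') ≤ c(C) + c(C')`, and if `e` contributes
to both `C` and `C'` it contributes to `C ∪ C'` and `C ∩ C'` as well. For two mincuts of `e`
neither term on the left can be smaller than the mincut value, so both are mincuts. The mincuts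
of `e` thus form a finite nonempty union-closed family, whose union is its unique maximal member. -/

open Finset

variable {V : Type*} [Fintype V] [DecidableEq V]

/-- capacity of the cut given by the source-side vertex set `C`:
total capacity of edges with tail in `C` and head outside `C`. -/
noncomputable def cutCap (E : Finset (V × V)) (w : V × V → ℝ) (C : Finset V) : ℝ :=
  ∑ e ∈ E.filter (fun e => e.1 ∈ C ∧ e.2 ∉ C), w e

/-- `C` is an (s,t)-cut. -/
def IsCut (s t : V) (C : Finset V) : Prop := s ∈ C ∧ t ∉ C

/-- edge `e` is a contributing (outgoing) edge of the cut `C`. -/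
def Contributes (e : V × V) (C : Finset V) : Prop := e.1 ∈ C ∧ e.2 ∉ C

/-- `f` is a feasible (s,t)-flow on edge set `E` with capacities `w`. -/
structure IsFlow (E : Finset (V × V)) (w : V × V → ℝ) (s t : V) (f : V × V → ℝ) : Prop where
  nonneg : ∀ e ∈ E, 0 ≤ f e
  le_cap : ∀ e ∈ E, f e ≤ w e
  support : ∀ e, e ∉ E → f e = 0
  conserve : ∀ v, v ≠ s → v ≠ t →
    ∑ e ∈ E.filter (fun e => e.1 = v), f e = ∑ e ∈ E.filter (fun e => e.2 = v), f e

/-- value of an (s,t)-flow: the net flow out of `s`. -/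
noncomputable def flowValue (E : Finset (V × V)) (s : V) (f : V × V → ℝ) : ℝ :=
  ∑ e ∈ E.filter (fun e => e.1 = s), f e - ∑ e ∈ E.filter (fun e => e.2 = s), f e

/-- `f` is a maximum (s,t)-flow. -/
def IsMaxFlow (E : Finset (V × V)) (w : V × V → ℝ) (s t : V) (f : V × V → ℝ) : Prop :=
  IsFlow E w s t f ∧ ∀ g, IsFlow E w s t g → flowValue E s g ≤ flowValue E s f

/-- capacity of a minimum (s,t)-cut. -/
noncomputable def minCutCap (E : Finset (V × V)) (w : V × V → ℝ) (s t : V) : ℝ :=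
  sInf {x | ∃ C : Finset V, IsCut s t C ∧ cutCap E w C = x}

/-- `e` is a vital edge: deleting it strictly decreases the min (s,t)-cut capacity. -/
def Vital (E : Finset (V × V)) (w : V × V → ℝ) (s t : V) (e : V × V) : Prop :=
  e ∈ E ∧ minCutCap (E.erase e) w s t < minCutCap E w s t

/-- `C` is a mincut for the edge `e`: a least-capacity (s,t)-cut in which `e` contributes. -/
def IsMincutFor (E : Finset (V × V)) (w : V × V → ℝ) (s t : V) (e : V × V)
    (C : Finset V) : Prop :=
  IsCut s t C ∧ Contributes e C ∧
    ∀ C', IsCut s t C' → Contributes e C' → cutCap E w C ≤ cutCap E w C'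

/-- total flow on edges leaving the cut `C`. -/
noncomputable def flowOut (E : Finset (V × V)) (f : V × V → ℝ) (C : Finset V) : ℝ :=
  ∑ e ∈ E.filter (fun e => e.1 ∈ C ∧ e.2 ∉ C), f e

/-- total flow on edges entering the cut `C`. -/
noncomputable def flowIn (E : Finset (V × V)) (f : V × V → ℝ) (C : Finset V) : ℝ :=
  ∑ e ∈ E.filter (fun e => e.1 ∉ C ∧ e.2 ∈ C), f e

lemma cutCap_union_add_cutCap_inter_le {V : Type*} [DecidableEq V] (E : Finset (V × V))
    (w : V × V → ℝ) (hw : ∀ e ∈ E, 0 ≤ w e) (C C' : Finset V) :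
    cutCap E w (C ∪ C') + cutCap E w (C ∩ C') ≤ cutCap E w C + cutCap E w C' := by
  simp only [cutCap, sum_filter, ← sum_add_distrib]
  refine sum_le_sum fun f hf => ?_
  have := hw f hf
  by_cases h1 : f.1 ∈ C <;> by_cases h2 : f.1 ∈ C' <;>
    by_cases h3 : f.2 ∈ C <;> by_cases h4 : f.2 ∈ C' <;>
    simp [h1, h2, h3, h4] <;> linarith

lemma IsCut.union {V : Type*} [DecidableEq V] {s t : V} {C C' : Finset V} (hC : IsCut s t C)
    (hC' : IsCut s t C') : IsCut s t (C ∪ C') :=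
  ⟨mem_union_left _ hC.1, by simp [hC.2, hC'.2]⟩

lemma IsCut.inter {V : Type*} [DecidableEq V] {s t : V} {C C' : Finset V} (hC : IsCut s t C)
    (hC' : IsCut s t C') : IsCut s t (C ∩ C') :=
  ⟨mem_inter.2 ⟨hC.1, hC'.1⟩, by simp [hC.2]⟩

lemma Contributes.union {V : Type*} [DecidableEq V] {e : V × V} {C C' : Finset V}
    (hC : Contributes e C) (hC' : Contributes e C') : Contributes e (C ∪ C') :=
  ⟨mem_union_left _ hC.1, by simp [hC.2, hC'.2]⟩

lemma Contributes.inter {V : Type*} [DecidableEq V] {e : V × V} {C C' : Finset V}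
    (hC : Contributes e C) (hC' : Contributes e C') : Contributes e (C ∩ C') :=
  ⟨mem_inter.2 ⟨hC.1, hC'.1⟩, by simp [hC.2]⟩

lemma IsMincutFor.union {V : Type*} [DecidableEq V] {E : Finset (V × V)} {w : V × V → ℝ}
    {s t : V} {e : V × V} {C C' : Finset V} (hw : ∀ e ∈ E, 0 ≤ w e)
    (hC : IsMincutFor E w s t e C) (hC' : IsMincutFor E w s t e C') :
    IsMincutFor E w s t e (C ∪ C') := by
  obtain ⟨hcut, hcontr, hmin⟩ := hC
  obtain ⟨hcut', hcontr', hmin'⟩ := hC'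
  have hsub := cutCap_union_add_cutCap_inter_le E w hw C C'
  have hunion := hmin _ (hcut.union hcut') (hcontr.union hcontr')
  have hinter := hmin' _ (hcut.inter hcut') (hcontr.inter hcontr')
  refine ⟨hcut.union hcut', hcontr.union hcontr', fun D hD hcontrD => ?_⟩
  linarith [hmin D hD hcontrD]

lemma exists_isMincutFor (E : Finset (V × V)) (w : V × V → ℝ) {s t : V} {e : V × V}
    (hex : ∃ C : Finset V, IsCut s t C ∧ Contributes e C) :
    ∃ C, IsMincutFor E w s t e C := by
  classical
  obtain ⟨C, hC⟩ := hex
  obtain ⟨C₀, hC₀, hmin⟩ := exists_min_image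
    (univ.filter fun C : Finset V => IsCut s t C ∧ Contributes e C) (cutCap E w)
    ⟨C, mem_filter.2 ⟨mem_univ _, hC⟩⟩
  rw [mem_filter] at hC₀
  exact ⟨C₀, hC₀.2.1, hC₀.2.2,
    fun D hD hcontrD => hmin D (mem_filter.2 ⟨mem_univ _, hD, hcontrD⟩)⟩

theorem SupClosed.existsUnique_maximal_of_finite {α : Type*} [SemilatticeSup α] [Finite α]
    {S : Set α} (hS : SupClosed S) (hne : S.Nonempty) :
    ∃! x, x ∈ S ∧ ∀ y ∈ S, ¬ x < y := by
  obtain ⟨x, hx⟩ := S.toFinite.exists_maximal hne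
  refine ⟨x, ⟨hx.prop, fun y hy => hx.not_gt hy⟩, fun y ⟨hy, hymax⟩ => ?_⟩
  have hsup := hS hy hx.prop
  calc y = y ⊔ x := le_sup_left.lt_or_eq.resolve_left (hymax _ hsup)
    _ = x := (hx.eq_of_le hsup le_sup_right).symm

theorem farthest_mincut_unique_general (E : Finset (V × V)) (w : V × V → ℝ) (s t : V)
    (hpos : ∀ e ∈ E, 0 < w e) (e : V × V)
    (hex : ∃ C : Finset V, IsCut s t C ∧ Contributes e C) :
    (∀ C C' : Finset V, IsMincutFor E w s t e C → IsMincutFor E w s t e C' →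
        IsMincutFor E w s t e (C ∪ C')) ∧
    (∃! C : Finset V, IsMincutFor E w s t e C ∧
        ∀ C', IsMincutFor E w s t e C' → ¬ C ⊂ C') := by
  have hunion : ∀ C C' : Finset V, IsMincutFor E w s t e C → IsMincutFor E w s t e C' →
      IsMincutFor E w s t e (C ∪ C') :=
    fun _ _ hC hC' => hC.union (fun f hf => (hpos f hf).le) hC'
  exact ⟨hunion, SupClosed.existsUnique_maximal_of_finite (S := {C | IsMincutFor E w s t e C})
    (fun _ hC _ hC' => hunion _ _ hC hC') (exists_isMincutFor E w hex)⟩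

/-- the union of two mincuts for an edge is a mincut for that edge, and the
farthest mincut for an edge is unique. -/
theorem farthest_mincut_unique (E : Finset (V × V)) (w : V × V → ℝ) (s t : V)
    (hst : s ≠ t) (hpos : ∀ e ∈ E, 0 < w e) (e : V × V) (he : e ∈ E)
    (hex : ∃ C : Finset V, IsCut s t C ∧ Contributes e C) :
    (∀ C C' : Finset V, IsMincutFor E w s t e C → IsMincutFor E w s t e C' →
        IsMincutFor E w s t e (C ∪ C')) ∧
    (∃! C : Finset V, IsMincutFor E w s t e C ∧
        ∀ C', IsMincutFor E w s t e C' → ¬ C ⊂ C') :=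
  farthest_mincut_unique_general E w s t hpos e hex
end

section
/- Let E_λ be a set of edges each of whose mincut capacity equals λ > 0. Then there exists an edge e ∈ E_λ with farthest mincut C such that for every other edge e' ∈ E_λ that contributes to C, C is also the farthest mincut for e'. (Such an e can be chosen so that its farthest mincut has maximum size among farthest mincuts of edges in E_λ.) -/
/-!
Among all pairs `(e, C)` with `e ∈ E_λ` and `C` a mincut for `e`, take one with `|C|` maximal.
Every such `C` has capacity `λ`, so `C` is a least-capacity cut for each `e' ∈ E_λ` contributing
to it; a mincut for `e'` properly containing `C` would contradict the maximality of `|C|`.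
-/

open Finset

variable {V : Type*} [Fintype V] [DecidableEq V]

/-- `C` is the farthest mincut for `e`: a mincut for `e` that is not a proper
subset of any other mincut for `e`. -/
def IsFarthestMincutFor (E : Finset (V × V)) (w : V × V → ℝ) (s t : V)
    (e : V × V) (C : Finset V) : Prop :=
  IsMincutFor E w s t e C ∧ ∀ C', IsMincutFor E w s t e C' → ¬ C ⊂ C'

section Mincut

omit [Fintype V]

variable {E : Finset (V × V)} {w : V × V → ℝ} {s t : V} {e : V × V} {C D : Finset V}

theorem IsMincutFor.cutCap_eq (hC : IsMincutFor E w s t e C) (hD : IsMincutFor E w s t e D) :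
    cutCap E w C = cutCap E w D :=
  le_antisymm (hC.2.2 D hD.1 hD.2.1) (hD.2.2 C hC.1 hC.2.1)

theorem IsMincutFor.of_cutCap_le (hC : IsMincutFor E w s t e C) (hD : IsCut s t D)
    (he : Contributes e D) (hle : cutCap E w D ≤ cutCap E w C) : IsMincutFor E w s t e D :=
  ⟨hD, he, fun D' hD' he' => hle.trans (hC.2.2 D' hD' he')⟩

theorem IsMincutFor.isFarthestMincutFor_of_card_le (hC : IsMincutFor E w s t e C)
    (hmax : ∀ D, IsMincutFor E w s t e D → D.card ≤ C.card) :
    IsFarthestMincutFor E w s t e C :=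
  ⟨hC, fun D hD hCD => (card_lt_card hCD).not_ge (hmax D hD)⟩

end Mincut

theorem exists_isMincutFor_card_max {E S : Finset (V × V)} {w : V × V → ℝ} {s t : V}
    (hS : S.Nonempty) (hmin : ∀ e ∈ S, ∃ C, IsMincutFor E w s t e C) :
    ∃ e ∈ S, ∃ C, IsMincutFor E w s t e C ∧
      ∀ e' ∈ S, ∀ D, IsMincutFor E w s t e' D → D.card ≤ C.card := by
  classical
  let T := (S ×ˢ univ).filter fun p : (V × V) × Finset V => IsMincutFor E w s t p.1 p.2
  have hT : T.Nonempty := by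
    obtain ⟨e, he⟩ := hS
    obtain ⟨C, hC⟩ := hmin e he
    exact ⟨(e, C), by simp [T, he, hC]⟩
  obtain ⟨⟨e, C⟩, hp, hmax⟩ := T.exists_max_image (fun p => p.2.card) hT
  simp only [T, mem_filter, mem_product, mem_univ, and_true] at hp
  exact ⟨e, hp.1, C, hp.2, fun e' he' D hD => hmax (e', D) (by simp [T, he', hD])⟩

theorem farthest_mincut_property_general (E Elam : Finset (V × V)) (w : V × V → ℝ)
    (s t : V) (lam : ℝ) (hne : Elam.Nonempty)
    (hcap : ∀ e ∈ Elam, ∃ C : Finset V, IsMincutFor E w s t e C ∧ cutCap E w C = lam) :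
    ∃ e ∈ Elam, ∃ C : Finset V, IsFarthestMincutFor E w s t e C ∧
      ∀ e' ∈ Elam, Contributes e' C → IsFarthestMincutFor E w s t e' C := by
  choose C₀ hC₀ hC₀cap using hcap
  obtain ⟨e, he, C, hC, hmax⟩ :=
    exists_isMincutFor_card_max hne fun e he => ⟨C₀ e he, hC₀ e he⟩
  have hCcap : cutCap E w C = lam := (hC.cutCap_eq (hC₀ e he)).trans (hC₀cap e he)
  have hfar : ∀ e' ∈ Elam, Contributes e' C → IsFarthestMincutFor E w s t e' C :=
    fun e' he' hcon =>
      have hmin : IsMincutFor E w s t e' C :=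
        (hC₀ e' he').of_cutCap_le hC.1 hcon (by rw [hCcap, hC₀cap e' he'])
      hmin.isFarthestMincutFor_of_card_le (hmax e' he')
  exact ⟨e, he, C, hfar e he hC.2.1, hfar⟩

/-- among edges whose mincut capacity equals `lam > 0`, there is an edge `e` whose
farthest mincut `C` is also the farthest mincut of every other edge of the set
contributing to `C`. -/
theorem farthest_mincut_property (E Elam : Finset (V × V)) (w : V × V → ℝ)
    (s t : V) (hst : s ≠ t) (hpos : ∀ e ∈ E, 0 < w e)
    (lam : ℝ) (hlam : 0 < lam) (hsub : Elam ⊆ E) (hne : Elam.Nonempty)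
    (hcap : ∀ e ∈ Elam, ∃ C : Finset V, IsMincutFor E w s t e C ∧ cutCap E w C = lam) :
    ∃ e ∈ Elam, ∃ C : Finset V, IsFarthestMincutFor E w s t e C ∧
      ∀ e' ∈ Elam, Contributes e' C → IsFarthestMincutFor E w s t e' C :=
  farthest_mincut_property_general E Elam w s t lam hne hcap
end

section
/- Let C and C' be (s,t)-cuts that are both mincuts for the same contributing edge e and have equal capacity λ, with C∖C' nonempty. Then C ∪ C' is also an (s,t)-cut of capacity λ in which e contributes, and C' is a proper subset of C ∪ C'. -/
open Finset

variable {V : Type*} [Fintype V] [DecidableEq V]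

section Cuts

omit [Fintype V]

variable {s t : V} {C D : Finset V}

theorem IsCut.inter_s17 (hC : IsCut s t C) (hD : IsCut s t D) : IsCut s t (C ∩ D) :=
  ⟨mem_inter.2 ⟨hC.1, hD.1⟩, fun h => hC.2 (mem_inter.1 h).1⟩

theorem IsCut.union_s17 (hC : IsCut s t C) (hD : IsCut s t D) : IsCut s t (C ∪ D) :=
  ⟨mem_union_left _ hC.1, by simp [hC.2, hD.2]⟩

theorem Contributes.inter_s17 {e : V × V} (hC : Contributes e C) (hD : Contributes e D) :
    Contributes e (C ∩ D) :=
  ⟨mem_inter.2 ⟨hC.1, hD.1⟩, fun h => hC.2 (mem_inter.1 h).1⟩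

theorem Contributes.union_s17 {e : V × V} (hC : Contributes e C) (hD : Contributes e D) :
    Contributes e (C ∪ D) :=
  ⟨mem_union_left _ hC.1, by simp [hC.2, hD.2]⟩

theorem cutCap_eq_sum_ite (E : Finset (V × V)) (w : V × V → ℝ) (C : Finset V) :
    cutCap E w C = ∑ x ∈ E, if x.1 ∈ C ∧ x.2 ∉ C then w x else 0 :=
  sum_filter _ _

/-- Edge by edge: an edge leaving `C ∩ D` or `C ∪ D` leaves `C` or `D`, and one leaving
`C ∪ D` and `C ∩ D` leaves both `C` and `D`. -/
theorem cutCap_inter_add_cutCap_union_le (E : Finset (V × V)) (w : V × V → ℝ)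
    (hw : ∀ x ∈ E, 0 ≤ w x) (C D : Finset V) :
    cutCap E w (C ∩ D) + cutCap E w (C ∪ D) ≤ cutCap E w C + cutCap E w D := by
  simp only [cutCap_eq_sum_ite, ← sum_add_distrib]
  refine sum_le_sum fun x hx => ?_
  have := hw x hx
  simp only [mem_inter, mem_union]
  split_ifs <;> simp_all

end Cuts

/-- if `C` and `C'` are both mincuts of capacity `lam` for a contributing edge `e`
and `C ∖ C'` is nonempty, then `C ∪ C'` is an (s,t)-cut of capacity `lam` in which
`e` contributes, and `C'` is a proper subset of `C ∪ C'`. -/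
theorem union_of_mincuts (E : Finset (V × V)) (w : V × V → ℝ) (s t : V)
    (hw : ∀ e ∈ E, 0 ≤ w e) (e : V × V) (lam : ℝ) (C C' : Finset V)
    (hC : IsMincutFor E w s t e C) (hC' : IsMincutFor E w s t e C')
    (hCcap : cutCap E w C = lam) (hC'cap : cutCap E w C' = lam)
    (hdiff : (C \ C').Nonempty) :
    IsCut s t (C ∪ C') ∧ Contributes e (C ∪ C') ∧
      cutCap E w (C ∪ C') = lam ∧ C' ⊂ C ∪ C' := by
  obtain ⟨hcut, hcontr, hmin⟩ := hC
  obtain ⟨hcut', hcontr', -⟩ := hC'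
  have hinter := hmin _ (hcut.inter_s17 hcut') (hcontr.inter_s17 hcontr')
  have hunion := hmin _ (hcut.union_s17 hcut') (hcontr.union_s17 hcontr')
  have hsubmod := cutCap_inter_add_cutCap_union_le E w hw C C'
  exact ⟨hcut.union_s17 hcut', hcontr.union_s17 hcontr', by linarith,
    right_lt_sup.2 (sdiff_nonempty.1 hdiff)⟩
end
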